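/- Let c1, c2, k1, k2 > 0 and set a11 = -2 k1 c1 (c1+c2), a12 = -k1 (c1^2 - c2^2), a21 = k2 (c1^2 - c2^2), a22 = -2 k2 c2 (c1+c2). Then every complex root μ of the characteristic equation μ^2 - (a11 + a22) μ + (a11 a22 - a12 a21) = 0 has strictly negative real part; i.e., the linearization matrix of the Cournot game at the stationary state is Hurwitz. -/
import Mathlib


/-- every complex root of the characteristic equation of the
Cournot linearization matrix has strictly negative real part (Hurwitz). -/
theorem cournot_linearization_hurwitz (c1 c2 k1 k2 : ℝ)
    (hc1 : 0 < c1) (hc2 : 0 < c2) (hk1 : 0 < k1) (hk2 : 0 < k2) :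
    let a11 : ℝ := -2 * k1 * c1 * (c1 + c2)
    let a12 : ℝ := -(k1 * (c1 ^ 2 - c2 ^ 2))
    let a21 : ℝ := k2 * (c1 ^ 2 - c2 ^ 2)
    let a22 : ℝ := -2 * k2 * c2 * (c1 + c2)
    ∀ μ : ℂ, μ ^ 2 - ((a11 : ℂ) + (a22 : ℂ)) * μ
        + ((a11 : ℂ) * (a22 : ℂ) - (a12 : ℂ) * (a21 : ℂ)) = 0 →
      μ.re < 0 := by
  intro a11 a12 a21 a22 μ hμ
  set x := μ.re with hx
  set y := μ.im with hy
  have hre := congrArg Complex.re hμ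
  have him := congrArg Complex.im hμ
  simp only [pow_two, Complex.add_re, Complex.sub_re, Complex.mul_re,
    Complex.mul_im, Complex.add_im, Complex.sub_im, Complex.ofReal_re,
    Complex.ofReal_im, Complex.zero_re, Complex.zero_im] at hre him
  -- trace negative
  have hS : a11 + a22 < 0 := by
    simp only [a11, a22]; nlinarith [mul_pos hk1 hc1, mul_pos hk2 hc2, mul_pos hc1 hc2]
  -- determinant positive
  have hP : 0 < a11 * a22 - a12 * a21 := by
    have h1 : 0 < k1 * k2 * c1 * c2 * (c1 + c2) ^ 2 := by positivity
    have h2 : 0 ≤ k1 * k2 * (c1 ^ 2 - c2 ^ 2) ^ 2 := by positivity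
    simp only [a11, a12, a21, a22]; nlinarith [h1, h2]
  have him' : μ.im * (2 * μ.re - (a11 + a22)) = 0 := by linarith [him, sq_nonneg μ.im]
  rcases mul_eq_zero.mp him' with h | h
  · nlinarith [hre, hS, hP, sq_nonneg μ.re]
  · linarith
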